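/- Let G be a connected simple graph on a finite vertex set V, f : V → ℝ, and for v ∈ V define φ₁(v) := Σ_{u ∈ V} |f(u) − dist_G(u,v)|, where dist_G is the shortest-path distance. Let λ ≥ 0 and L := {v ∈ V : φ₁(v) ≤ λ}, and suppose L is nonempty. Suppose there exist τ : V → ℝ and constants c > 0, ρ ≥ 1 such that c·dist_G(x,y) ≤ |τ(x) − τ(y)| ≤ c·ρ·dist_G(x,y) for all x, y ∈ V. Then for every v ∈ L there is an enumeration s_1, …, s_k of L with s_1 = v and Σ_{i=1}^{k−1} dist_G(s_i, s_{i+1}) ≤ 2·ρ·λ; that is, tour_G(L) ≤ 2ρλ. -/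

import Mathlib

/-!
Two points `u, w` of the sublevel set are within graph distance `λ`, because
`2 dist(u, w) ≤ ∑ₓ |dist(x, u) - dist(x, w)| ≤ φ₁(u) + φ₁(w)`; so `τ` maps the sublevel set into
an interval of length `cρλ`. From `v`, walk down through the points of the set in decreasing
`τ`-order to the lowest one, then up through the remaining points in increasing order. The
`τ`-variation of this walk is at most twice the length of the interval, and each step of the walk
costs at most `1/c` times its `τ`-variation in graph distance.
-/

/-- The length, in graph distance, of a walk visiting the points of a list in order. -/
noncomputable def graphPathLen {V : Type*} (G : SimpleGraph V) (l : List V) : ℕ :=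
  (l.zipWith G.dist l.tail).sum

section PathLength

variable {α M : Type*} [AddCommMonoid M] (d : α → α → M)

def pathLength (l : List α) : M :=
  (l.zipWith d l.tail).sum

@[simp]
lemma pathLength_singleton (a : α) : pathLength d [a] = 0 := by
  simp [pathLength]

@[simp]
lemma pathLength_cons_cons (a b : α) (l : List α) :
    pathLength d (a :: b :: l) = d a b + pathLength d (b :: l) := by
  simp [pathLength]

lemma pathLength_append_cons (l₁ : List α) (a : α) (l₂ : List α) :
    pathLength d (l₁ ++ a :: l₂) = pathLength d (l₁ ++ [a]) + pathLength d (a :: l₂) := by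
  induction l₁ with
  | nil => simp
  | cons b l₁ ih =>
    cases l₁ with
    | nil => simp
    | cons c l₁ => simp_all [add_assoc]

lemma pathLength_reverse (hd : ∀ a b, d a b = d b a) (l : List α) :
    pathLength d l.reverse = pathLength d l := by
  induction l with
  | nil => rfl
  | cons a l ih =>
    cases l with
    | nil => rfl
    | cons b l =>
      rw [List.reverse_cons, List.reverse_cons, List.append_assoc, List.singleton_append,
        pathLength_append_cons, ← List.reverse_cons, ih, pathLength_cons_cons,
        pathLength_cons_cons, pathLength_singleton, hd, add_zero, add_comm]

lemma map_pathLength {N : Type*} [AddCommMonoid N] (φ : M →+ N) (l : List α) :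
    φ (pathLength d l) = pathLength (fun a b => φ (d a b)) l := by
  simp [pathLength, map_list_sum, List.map_zipWith]

lemma pathLength_mono [PartialOrder M] [IsOrderedAddMonoid M] {d d' : α → α → M}
    (h : ∀ a b, d a b ≤ d' a b) (l : List α) : pathLength d l ≤ pathLength d' l := by
  induction l with
  | nil => rfl
  | cons a l ih =>
    cases l with
    | nil => simp
    | cons b l => simpa using add_le_add (h a b) ih

end PathLength

section RealLine

variable {V : Type*} (τ : V → ℝ)

lemma pathLength_abs_sub_le_of_isChain {a : V} {l : List V} {hi : ℝ}
    (hmono : (a :: l).IsChain (fun x y => τ x ≤ τ y)) (hhi : ∀ x ∈ a :: l, τ x ≤ hi) :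
    pathLength (fun x y => |τ x - τ y|) (a :: l) ≤ hi - τ a := by
  induction l generalizing a with
  | nil => simpa using hhi a (by simp)
  | cons b l ih =>
    rw [List.isChain_cons_cons] at hmono
    have hb := ih hmono.2 (fun x hx => hhi x (List.mem_cons_of_mem a hx))
    rw [pathLength_cons_cons, abs_sub_comm, abs_of_nonneg (sub_nonneg.mpr hmono.1)]
    linarith

lemma Finset.exists_nodup_toFinset_eq_pairwise_le [DecidableEq V] (S : Finset V) :
    ∃ l : List V, l.Nodup ∧ l.toFinset = S ∧ l.Pairwise (fun x y => τ x ≤ τ y) := by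
  have hperm := List.mergeSort_perm S.toList (fun x y => decide (τ x ≤ τ y))
  refine ⟨_, hperm.nodup_iff.mpr S.nodup_toList, ?_, ?_⟩
  · rw [List.toFinset_eq_of_perm _ _ hperm, Finset.toList_toFinset]
  · refine (List.pairwise_mergeSort ?_ ?_ _).imp (by simp)
    · simpa using fun a b c => le_trans
    · simpa using fun a b => le_total (τ a) (τ b)

lemma exists_tour_pathLength_abs_sub_le [DecidableEq V] {S : Finset V} {v : V} (hv : v ∈ S)
    {D : ℝ} (hD : ∀ x ∈ S, ∀ y ∈ S, τ x - τ y ≤ D) :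
    ∃ l : List V, l.Nodup ∧ l.toFinset = S ∧ l.head? = some v ∧
      pathLength (fun x y => |τ x - τ y|) l ≤ 2 * D := by
  obtain ⟨la, hla_nodup, hla, hla_sorted⟩ :=
    Finset.exists_nodup_toFinset_eq_pairwise_le τ (S.filter fun x => x ≠ v ∧ τ x ≤ τ v)
  obtain ⟨lb, hlb_nodup, hlb, hlb_sorted⟩ :=
    Finset.exists_nodup_toFinset_eq_pairwise_le τ (S.filter fun x => τ v < τ x)
  have mem_la : ∀ x, x ∈ la ↔ x ∈ S ∧ x ≠ v ∧ τ x ≤ τ v := fun x => by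
    rw [← List.mem_toFinset, hla, Finset.mem_filter]
  have mem_lb : ∀ x, x ∈ lb ↔ x ∈ S ∧ τ v < τ x := fun x => by
    rw [← List.mem_toFinset, hlb, Finset.mem_filter]
  -- the tour is `(la ++ [v]).reverse ++ lb`; `m` is its lowest point
  obtain ⟨m, t, hmt⟩ := List.exists_cons_of_ne_nil (List.concat_ne_nil v la)
  have mem_mt : ∀ x ∈ m :: t, x ∈ S ∧ τ x ≤ τ v := by
    intro x hx
    rw [← hmt, List.mem_append, mem_la, List.mem_singleton] at hx
    rcases hx with hx | rfl
    exacts [⟨hx.1, hx.2.2⟩, ⟨hv, le_rfl⟩]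
  have hdown : (m :: t).Pairwise (fun x y => τ x ≤ τ y) := by
    rw [← hmt, List.pairwise_append]
    exact ⟨hla_sorted, by simp, fun x hx y hy => by simp_all⟩
  have hm := mem_mt m List.mem_cons_self
  have hup : (m :: lb).Pairwise (fun x y => τ x ≤ τ y) :=
    List.pairwise_cons.mpr ⟨fun x hx => hm.2.trans ((mem_lb x).mp hx).2.le, hlb_sorted⟩
  refine ⟨(la ++ [v]).reverse ++ lb, ?_, ?_, by simp, ?_⟩
  · rw [List.nodup_append, List.nodup_reverse, List.nodup_append]
    refine ⟨⟨hla_nodup, List.nodup_singleton v, by simp_all⟩, hlb_nodup, ?_⟩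
    intro x hx y hy hxy
    subst hxy
    have := (mem_mt x (hmt ▸ List.mem_reverse.mp hx)).2
    linarith [((mem_lb x).mp hy).2]
  · ext x
    by_cases hxv : x = v
    · simp [hxv, hv]
    · have := le_or_gt (τ x) (τ v)
      simp only [List.toFinset_append, List.toFinset_reverse, List.toFinset_cons,
        List.toFinset_nil, hla, hlb, Finset.mem_union, Finset.mem_insert, Finset.mem_filter, hxv]
      tauto
  · calc pathLength (fun x y => |τ x - τ y|) ((la ++ [v]).reverse ++ lb)
          = pathLength (fun x y => |τ x - τ y|) (m :: t)
            + pathLength (fun x y => |τ x - τ y|) (m :: lb) := by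
          rw [hmt, List.reverse_cons, List.append_assoc, List.singleton_append,
            pathLength_append_cons, ← List.reverse_cons,
            pathLength_reverse _ fun x y => abs_sub_comm _ _]
      _ ≤ (τ v - τ m) + (τ m + D - τ m) := by
          gcongr
          · exact pathLength_abs_sub_le_of_isChain τ hdown.isChain (fun x hx => (mem_mt x hx).2)
          · refine pathLength_abs_sub_le_of_isChain τ hup.isChain fun x hx => ?_
            have hx : x ∈ S := by
              rcases List.mem_cons.mp hx with rfl | hx
              exacts [hm.1, ((mem_lb x).mp hx).1]
            linarith [hD x hx m hm.1]
      _ ≤ 2 * D := by linarith [hD v hv m hm.1]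

end RealLine

section ImpliedL1Error

variable {V : Type*} [Fintype V] (G : SimpleGraph V) (f : V → ℝ)

noncomputable def impliedL1Error (v : V) : ℝ :=
  ∑ u, |f u - (G.dist u v : ℝ)|

lemma sum_abs_dist_sub_dist_le_impliedL1Error_add (u w : V) :
    ∑ x, |(G.dist x u : ℝ) - G.dist x w| ≤ impliedL1Error G f u + impliedL1Error G f w := by
  rw [impliedL1Error, impliedL1Error, ← Finset.sum_add_distrib]
  gcongr with x
  rw [abs_sub_comm (f x)]
  exact abs_sub_le _ _ _

lemma two_mul_dist_le_sum_abs_dist_sub_dist (u w : V) :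
    2 * (G.dist u w : ℝ) ≤ ∑ x, |(G.dist x u : ℝ) - G.dist x w| := by
  classical
  by_cases huw : u = w
  · subst huw
    simp
  calc 2 * (G.dist u w : ℝ)
      = ∑ x ∈ {u, w}, |(G.dist x u : ℝ) - G.dist x w| := by
        simp [Finset.sum_pair huw, SimpleGraph.dist_comm]; ring
    _ ≤ ∑ x, |(G.dist x u : ℝ) - G.dist x w| :=
        Finset.sum_le_univ_sum_of_nonneg fun x => abs_nonneg _

lemma dist_le_of_impliedL1Error_le {u w : V} {lam : ℝ} (hu : impliedL1Error G f u ≤ lam)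
    (hw : impliedL1Error G f w ≤ lam) : (G.dist u w : ℝ) ≤ lam := by
  linarith [two_mul_dist_le_sum_abs_dist_sub_dist G u w,
    sum_abs_dist_sub_dist_le_impliedL1Error_add G f u w]

end ImpliedL1Error

lemma mul_graphPathLen_le_pathLength {V : Type*} {G : SimpleGraph V} {τ : V → ℝ} {c : ℝ}
    (h : ∀ x y, c * (G.dist x y : ℝ) ≤ |τ x - τ y|) (l : List V) :
    c * (graphPathLen G l : ℝ) ≤ pathLength (fun x y => |τ x - τ y|) l := by
  calc c * (graphPathLen G l : ℝ)
      = pathLength (fun x y => c * (G.dist x y : ℝ)) l :=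
        map_pathLength G.dist ((AddMonoidHom.mulLeft c).comp (Nat.castAddMonoidHom ℝ)) l
    _ ≤ pathLength (fun x y => |τ x - τ y|) l := pathLength_mono h l

theorem phi1_sublevel_tour_bound_general
    {V : Type*} [Fintype V] [DecidableEq V]
    (G : SimpleGraph V) (f : V → ℝ)
    (lam : ℝ)
    (L : Finset V)
    (hL : L = Finset.univ.filter
      (fun v => ∑ u, |f u - (G.dist u v : ℝ)| ≤ lam))
    (τ : V → ℝ) (c ρ : ℝ) (hc : 0 < c) (hρ : 1 ≤ ρ)
    (hemb : ∀ x y : V,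
      c * (G.dist x y : ℝ) ≤ |τ x - τ y| ∧ |τ x - τ y| ≤ c * ρ * (G.dist x y : ℝ)) :
    ∀ v ∈ L, ∃ l : List V, l.Nodup ∧ l.toFinset = L ∧ l.head? = some v ∧
      (graphPathLen G l : ℝ) ≤ 2 * ρ * lam := by
  intro v hv
  have hspread : ∀ x ∈ L, ∀ y ∈ L, τ x - τ y ≤ c * ρ * lam := by
    intro x hx y hy
    rw [hL, Finset.mem_filter] at hx hy
    calc τ x - τ y ≤ |τ x - τ y| := le_abs_self _
      _ ≤ c * ρ * G.dist x y := (hemb x y).2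
      _ ≤ c * ρ * lam := by
          have : 0 ≤ c * ρ := mul_nonneg hc.le (by linarith)
          gcongr
          exact dist_le_of_impliedL1Error_le G f hx.2 hy.2
  obtain ⟨l, hnodup, hl, hhead, hlen⟩ := exists_tour_pathLength_abs_sub_le τ hv hspread
  refine ⟨l, hnodup, hl, hhead, le_of_mul_le_mul_left ?_ hc⟩
  calc c * (graphPathLen G l : ℝ)
      ≤ pathLength (fun x y => |τ x - τ y|) l :=
        mul_graphPathLen_le_pathLength (fun x y => (hemb x y).1) l
    _ ≤ 2 * (c * ρ * lam) := hlen
    _ = c * (2 * ρ * lam) := by ring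

/-- Core estimate behind the `φ₁` planning bound: if the connected graph `G` embeds
into the real line with distortion `ρ`, then the sublevel set `L = {v : φ₁(v) ≤ λ}`
admits, from every starting point of `L`, an enumeration of total graph-distance
length at most `2ρλ`; that is, `tour_G(L) ≤ 2ρλ`. -/
theorem phi1_sublevel_tour_bound
    {V : Type*} [Fintype V] [DecidableEq V]
    (G : SimpleGraph V) (hG : G.Connected) (f : V → ℝ)
    (lam : ℝ) (hlam : 0 ≤ lam)
    (L : Finset V)
    (hL : L = Finset.univ.filter
      (fun v => ∑ u, |f u - (G.dist u v : ℝ)| ≤ lam))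
    (hLne : L.Nonempty)
    (τ : V → ℝ) (c ρ : ℝ) (hc : 0 < c) (hρ : 1 ≤ ρ)
    (hemb : ∀ x y : V,
      c * (G.dist x y : ℝ) ≤ |τ x - τ y| ∧ |τ x - τ y| ≤ c * ρ * (G.dist x y : ℝ)) :
    ∀ v ∈ L, ∃ l : List V, l.Nodup ∧ l.toFinset = L ∧ l.head? = some v ∧
      (graphPathLen G l : ℝ) ≤ 2 * ρ * lam :=
  phi1_sublevel_tour_bound_general G f lam L hL τ c ρ hc hρ hemb
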